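/- Let G be a finite subgroup of GL_d(ℝ) such that gℤ^d = ℤ^d for every g ∈ G, let F = {f_1, …, f_m} ⊆ L²(ℝ^d), let φ(ξ) = Σ_{i=1}^m |f̂_i(ξ)|² and Φ_G(ξ) = Σ_{g ∈ G} Σ_{i=1}^m |f̂_i(gξ)|², and let D ⊆ ℝ^d be a measurable set such that, up to a set of measure zero, ℝ^d is the disjoint union of {gD : g ∈ G}. Fix M > 0 and let 𝕄(G,M) = {Ω ⊆ ℝ^d measurable : |Ω| = M and gΩ = Ω for all g ∈ G}. Suppose Ω_0 ∈ 𝕄(G,M) satisfies ∫_{Ω_0} φ ≥ ∫_Ω φ for all Ω ∈ 𝕄(G,M), and Σ_0 ⊆ D is measurable with |Σ_0| = M/(#G) and ∫_{Σ_0} Φ_G ≥ ∫_Σ Φ_G for all measurable Σ ⊆ D with |Σ| = M/(#G). Then ∫_{Ω_0} φ(ξ) dξ = ∫_{Σ_0} Φ_G(ω) dω. -/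

import Mathlib

open MeasureTheory
open scoped ENNReal

noncomputable section

abbrev Rd (d : ℕ) := EuclideanSpace ℝ (Fin d)
abbrev L2 (d : ℕ) := Lp ℂ 2 (volume : Measure (Rd d))

/-- The integer lattice `ℤ^d` inside `ℝ^d`. -/
def zdLattice (d : ℕ) : Set (Rd d) := {x | ∀ i, ∃ n : ℤ, x i = (n : ℝ)}

/-- `φ(ξ) = ∑ i, |f̂ i (ξ)|²` where `f̂ i = T (F i)` is the Plancherel transform. -/
def sqSum {d m : ℕ} (T : L2 d ≃ₗᵢ[ℂ] L2 d) (F : Fin m → L2 d) (ξ : Rd d) : ℝ :=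
  ∑ i, ‖T (F i) ξ‖ ^ 2

/-- `Φ_G(ξ) = ∑_{g ∈ G} ∑ i, |f̂ i (g ξ)|²`. -/
def sqSumG {d m : ℕ} (G : Subgroup ((Rd d) ≃ₗ[ℝ] (Rd d))) [Fintype G]
    (T : L2 d ≃ₗᵢ[ℂ] L2 d) (F : Fin m → L2 d) (ξ : Rd d) : ℝ :=
  ∑ g : G, ∑ i, ‖T (F i) ((g : (Rd d) ≃ₗ[ℝ] (Rd d)) ξ)‖ ^ 2

namespace OptAux

variable {d : ℕ}

lemma basis_mem_zdLattice (j : Fin d) : ((PiLp.basisFun 2 ℝ (Fin d)) j : Rd d) ∈ zdLattice d := by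
  classical
  intro i
  refine ⟨if i = j then 1 else 0, ?_⟩
  rw [PiLp.basisFun_apply]
  simp [Pi.single_apply]

lemma exists_int_det (g : Rd d →ₗ[ℝ] Rd d)
    (h : ∀ x ∈ zdLattice d, g x ∈ zdLattice d) : ∃ n : ℤ, LinearMap.det g = (n : ℝ) := by
  classical
  set B := PiLp.basisFun 2 ℝ (Fin d) with hB
  have hmem : ∀ j i, ∃ n : ℤ, (g (B j)) i = (n : ℝ) :=
    fun j i => h _ (basis_mem_zdLattice j) i
  refine ⟨(Matrix.of (fun i j => (hmem j i).choose)).det, ?_⟩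
  have hA : LinearMap.toMatrix B B g
      = (Matrix.of (fun i j => (hmem j i).choose)).map (Int.cast : ℤ → ℝ) := by
    ext i j
    rw [LinearMap.toMatrix_apply, PiLp.basisFun_repr]
    exact (hmem j i).choose_spec
  rw [← LinearMap.det_toMatrix B, hA]
  exact ((Int.castRingHom ℝ).map_det _).symm

lemma abs_det_eq_one (g : Rd d ≃ₗ[ℝ] Rd d) (hg : ⇑g '' zdLattice d = zdLattice d) :
    |LinearMap.det (g : Rd d →ₗ[ℝ] Rd d)| = 1 := by
  obtain ⟨a, ha⟩ := exists_int_det (g : Rd d →ₗ[ℝ] Rd d)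
    (fun x hx => hg ▸ Set.mem_image_of_mem _ hx)
  obtain ⟨b, hb⟩ := exists_int_det (g.symm : Rd d →ₗ[ℝ] Rd d) (by
    intro x hx
    rw [← hg] at hx
    obtain ⟨y, hy, rfl⟩ := hx
    simpa using hy)
  have hcomp : (a : ℝ) * b = 1 := by
    rw [← ha, ← hb, ← LinearMap.det_comp]
    have h2 : (g : Rd d →ₗ[ℝ] Rd d) ∘ₗ (g.symm : Rd d →ₗ[ℝ] Rd d) = LinearMap.id := by
      ext x; simp
    rw [h2, LinearMap.det_id]
  have hab : a * b = 1 := by exact_mod_cast hcomp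
  have h3 : a = 1 ∨ a = -1 := Int.isUnit_iff.mp (IsUnit.of_mul_eq_one b hab)
  rw [ha]
  rcases h3 with h | h <;> simp [h]

end OptAux

/-- If `Ω₀` maximizes `∫_Ω φ` over `G`-invariant measurable sets of measure `M`, and `Sig₀`
maximizes `∫_Σ Φ_G` over measurable subsets of the section `D` of measure `M / #G`, then
`∫_{Ω₀} φ = ∫_{Sig₀} Φ_G`.  Here `T` is the Plancherel transform of `L²(ℝ^d)`. -/
theorem optimal_invariant_omega_eq_section_integral {d m : ℕ}
    (G : Subgroup ((Rd d) ≃ₗ[ℝ] (Rd d))) [Fintype G]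
    (hG : ∀ g ∈ G, ⇑g '' zdLattice d = zdLattice d)
    (F : Fin m → L2 d)
    (T : L2 d ≃ₗᵢ[ℂ] L2 d)
    (hT : ∀ f : L2 d, Integrable (⇑f) volume →
      ⇑(T f) =ᵐ[volume] VectorFourier.fourierIntegral Real.fourierChar volume (innerₗ (Rd d)) (⇑f))
    (D : Set (Rd d)) (hDmeas : MeasurableSet D)
    (hDcover : volume ((Set.univ : Set (Rd d)) \ ⋃ g : G, (g : (Rd d) ≃ₗ[ℝ] (Rd d)) '' D) = 0)
    (hDdisj : ∀ g ∈ G, ∀ g' ∈ G, g ≠ g' → volume ((⇑g '' D) ∩ (⇑g' '' D)) = 0)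
    (M : ℝ) (hM : 0 < M)
    (Ω₀ : Set (Rd d)) (hΩ₀meas : MeasurableSet Ω₀)
    (hΩ₀vol : volume Ω₀ = ENNReal.ofReal M)
    (hΩ₀inv : ∀ g ∈ G, ⇑g '' Ω₀ = Ω₀)
    (hΩ₀max : ∀ Ω : Set (Rd d), MeasurableSet Ω → volume Ω = ENNReal.ofReal M →
      (∀ g ∈ G, ⇑g '' Ω = Ω) → ∫ ξ in Ω, sqSum T F ξ ≤ ∫ ξ in Ω₀, sqSum T F ξ)
    (Sig₀ : Set (Rd d)) (hSig₀meas : MeasurableSet Sig₀) (hSig₀sub : Sig₀ ⊆ D)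
    (hSig₀vol : volume Sig₀ = ENNReal.ofReal (M / Fintype.card G))
    (hSig₀max : ∀ S : Set (Rd d), S ⊆ D → MeasurableSet S →
      volume S = ENNReal.ofReal (M / Fintype.card G) →
      ∫ ξ in S, sqSumG G T F ξ ≤ ∫ ξ in Sig₀, sqSumG G T F ξ) :
    ∫ ξ in Ω₀, sqSum T F ξ = ∫ ω in Sig₀, sqSumG G T F ω := by
  classical
  have habs : ∀ g : G, |LinearMap.det ((g : Rd d ≃ₗ[ℝ] Rd d) : Rd d →ₗ[ℝ] Rd d)| = 1 :=
    fun g => OptAux.abs_det_eq_one _ (hG g g.2)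
  have hdet0 : ∀ g : G, LinearMap.det ((g : Rd d ≃ₗ[ℝ] Rd d) : Rd d →ₗ[ℝ] Rd d) ≠ 0 := by
    intro g h
    simpa [h] using habs g
  have hvol : ∀ (g : G) (s : Set (Rd d)), volume (⇑(g : Rd d ≃ₗ[ℝ] Rd d) '' s) = volume s := by
    intro g s
    have h1 := Measure.addHaar_image_linearMap (volume : Measure (Rd d))
      ((g : Rd d ≃ₗ[ℝ] Rd d) : Rd d →ₗ[ℝ] Rd d) s
    simpa [habs g] using h1
  have hMP : ∀ g : G, MeasurePreserving (⇑(g : Rd d ≃ₗ[ℝ] Rd d)) volume volume := by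
    intro g
    refine ⟨(LinearMap.continuous_of_finiteDimensional
      ((g : Rd d ≃ₗ[ℝ] Rd d) : Rd d →ₗ[ℝ] Rd d)).measurable, ?_⟩
    have h1 := Measure.map_linearMap_addHaar_eq_smul_addHaar (volume : Measure (Rd d)) (hdet0 g)
    rw [show ⇑((g : Rd d ≃ₗ[ℝ] Rd d) : Rd d →ₗ[ℝ] Rd d) = ⇑(g : Rd d ≃ₗ[ℝ] Rd d) from rfl] at h1
    rw [h1, abs_inv, habs g]
    simp
  have hME : ∀ g : G, MeasurableEmbedding (⇑(g : Rd d ≃ₗ[ℝ] Rd d)) := fun g =>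
    ((g : Rd d ≃ₗ[ℝ] Rd d).toContinuousLinearEquiv.toHomeomorph.toMeasurableEquiv).measurableEmbedding
  have hint : ∀ i : Fin m, Integrable (fun ξ => ‖T (F i) ξ‖ ^ 2) (volume : Measure (Rd d)) := by
    intro i
    have h1 := (Lp.memLp (T (F i))).integrable_norm_rpow (by norm_num) (by norm_num)
    have h2 : ((2 : ℝ≥0∞)).toReal = ((2 : ℕ) : ℝ) := by norm_num
    simpa [h2, Real.rpow_natCast] using h1
  have hφ : Integrable (sqSum T F) (volume : Measure (Rd d)) := by
    have h1 := integrable_finset_sum (μ := (volume : Measure (Rd d))) Finset.univ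
      (fun i (_ : i ∈ Finset.univ) => hint i)
    unfold sqSum
    simpa using h1
  have hφg : ∀ g : G, Integrable (fun ξ => sqSum T F ((g : Rd d ≃ₗ[ℝ] Rd d) ξ))
      (volume : Measure (Rd d)) := fun g => ((hMP g).integrable_comp_emb (hME g)).2 hφ
  have hΦ : Integrable (sqSumG G T F) (volume : Measure (Rd d)) := by
    have h1 := integrable_finset_sum (μ := (volume : Measure (Rd d))) Finset.univ
      (fun (g : G) (_ : g ∈ Finset.univ) => hφg g)
    unfold sqSumG
    simpa [sqSum] using h1
  have hdisj : ∀ S : Set (Rd d), S ⊆ D →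
      Pairwise (Function.onFun (AEDisjoint volume) fun g : G => ⇑(g : Rd d ≃ₗ[ℝ] Rd d) '' S) := by
    intro S hSD g g' hgg'
    refine measure_mono_null
      (Set.inter_subset_inter (Set.image_mono hSD) (Set.image_mono hSD)) ?_
    exact hDdisj _ g.2 _ g'.2 (fun hc => hgg' (Subtype.ext hc))
  have hmeasim : ∀ (g : G) (S : Set (Rd d)), MeasurableSet S →
      MeasurableSet (⇑(g : Rd d ≃ₗ[ℝ] Rd d) '' S) :=
    fun g S hS => (hME g).measurableSet_image.2 hS
  have keyU : ∀ S : Set (Rd d), S ⊆ D → MeasurableSet S →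
      ∫ ξ in ⋃ g : G, ⇑(g : Rd d ≃ₗ[ℝ] Rd d) '' S, sqSum T F ξ = ∫ ξ in S, sqSumG G T F ξ := by
    intro S hSD hSm
    rw [integral_iUnion_ae (fun g => (hmeasim g S hSm).nullMeasurableSet) (hdisj S hSD)
      hφ.integrableOn, tsum_fintype]
    have h1 : ∀ g : G, ∫ ξ in ⇑(g : Rd d ≃ₗ[ℝ] Rd d) '' S, sqSum T F ξ
        = ∫ ξ in S, sqSum T F ((g : Rd d ≃ₗ[ℝ] Rd d) ξ) :=
      fun g => (hMP g).setIntegral_image_emb (hME g) _ _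
    rw [Finset.sum_congr rfl fun g _ => h1 g,
      ← integral_finset_sum Finset.univ (fun g _ => (hφg g).integrableOn)]
    refine setIntegral_congr_fun hSm fun ξ _ => ?_
    simp [sqSumG, sqSum]
  have hcardpos : 0 < Fintype.card G := Fintype.card_pos
  have hvolU : ∀ S : Set (Rd d), S ⊆ D → MeasurableSet S →
      volume (⋃ g : G, ⇑(g : Rd d ≃ₗ[ℝ] Rd d) '' S) = (Fintype.card G : ℝ≥0∞) * volume S := by
    intro S hSD hSm
    rw [measure_iUnion₀ (hdisj S hSD) (fun g => (hmeasim g S hSm).nullMeasurableSet),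
      tsum_fintype]
    simp [hvol, Finset.sum_const, nsmul_eq_mul]
  have hcards : (Fintype.card G : ℝ≥0∞) * ENNReal.ofReal (M / Fintype.card G)
      = ENNReal.ofReal M := by
    rw [← ENNReal.ofReal_natCast (Fintype.card G), ← ENNReal.ofReal_mul (Nat.cast_nonneg _)]
    congr 1
    rw [mul_comm]
    exact div_mul_cancel₀ M (Nat.cast_ne_zero.mpr hcardpos.ne')
  set Ω₁ := ⋃ g : G, ⇑(g : Rd d ≃ₗ[ℝ] Rd d) '' Sig₀ with hΩ₁
  have hΩ₁meas : MeasurableSet Ω₁ := MeasurableSet.iUnion fun g => hmeasim g _ hSig₀meas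
  have hΩ₁vol : volume Ω₁ = ENNReal.ofReal M := by
    rw [hΩ₁, hvolU Sig₀ hSig₀sub hSig₀meas, hSig₀vol, hcards]
  have hΩ₁inv : ∀ h ∈ G, ⇑h '' Ω₁ = Ω₁ := by
    intro h hh
    rw [hΩ₁, Set.image_iUnion]
    have h2 : ∀ g : G, ⇑h '' (⇑(g : Rd d ≃ₗ[ℝ] Rd d) '' Sig₀)
        = ⇑(((⟨h, hh⟩ : G) * g : G) : Rd d ≃ₗ[ℝ] Rd d) '' Sig₀ := by
      intro g
      rw [← Set.image_comp]
      rfl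
    rw [Set.iUnion_congr h2]
    exact (Equiv.mulLeft (⟨h, hh⟩ : G)).surjective.iUnion_comp
      (fun g : G => ⇑(g : Rd d ≃ₗ[ℝ] Rd d) '' Sig₀)
  have hUeq : (⋃ g : G, ⇑(g : Rd d ≃ₗ[ℝ] Rd d) '' (Ω₀ ∩ D))
      = Ω₀ ∩ ⋃ g : G, ⇑(g : Rd d ≃ₗ[ℝ] Rd d) '' D := by
    rw [Set.inter_iUnion]
    refine Set.iUnion_congr fun g => ?_
    rw [Set.image_inter (g : Rd d ≃ₗ[ℝ] Rd d).injective, hΩ₀inv _ g.2]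
  have hae : (⋃ g : G, ⇑(g : Rd d ≃ₗ[ℝ] Rd d) '' (Ω₀ ∩ D)) =ᵐ[volume] Ω₀ := by
    rw [ae_eq_set]
    constructor
    · rw [hUeq]
      have h2 : (Ω₀ ∩ ⋃ g : G, ⇑(g : Rd d ≃ₗ[ℝ] Rd d) '' D) \ Ω₀ = ∅ :=
        Set.diff_eq_empty.2 Set.inter_subset_left
      rw [h2]; exact measure_empty
    · rw [hUeq]
      refine measure_mono_null (fun x hx => ?_) hDcover
      exact ⟨Set.mem_univ x, fun hxU => hx.2 ⟨hx.1, hxU⟩⟩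
  have hvolID : volume (Ω₀ ∩ D) = ENNReal.ofReal (M / Fintype.card G) := by
    have h1 : (Fintype.card G : ℝ≥0∞) * volume (Ω₀ ∩ D) = ENNReal.ofReal M := by
      rw [← hvolU (Ω₀ ∩ D) Set.inter_subset_right (hΩ₀meas.inter hDmeas),
        measure_congr hae, hΩ₀vol]
    have hc0 : (Fintype.card G : ℝ≥0∞) ≠ 0 := by exact_mod_cast hcardpos.ne'
    have hct : (Fintype.card G : ℝ≥0∞) ≠ ⊤ := ENNReal.natCast_ne_top _
    have h2 : volume (Ω₀ ∩ D) = ENNReal.ofReal M / (Fintype.card G : ℝ≥0∞) :=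
      (ENNReal.eq_div_iff hc0 hct).2 h1
    have h3 : ENNReal.ofReal (M / Fintype.card G) = ENNReal.ofReal M / (Fintype.card G : ℝ≥0∞) :=
      (ENNReal.eq_div_iff hc0 hct).2 hcards
    rw [h2, h3]
  have E1 : ∫ ξ in Ω₀, sqSum T F ξ = ∫ ξ in Ω₀ ∩ D, sqSumG G T F ξ := by
    rw [← keyU (Ω₀ ∩ D) Set.inter_subset_right (hΩ₀meas.inter hDmeas)]
    exact (setIntegral_congr_set hae).symm
  have E3 : ∫ ω in Sig₀, sqSumG G T F ω = ∫ ξ in Ω₁, sqSum T F ξ :=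
    (keyU Sig₀ hSig₀sub hSig₀meas).symm
  have hle1 : ∫ ξ in Ω₀, sqSum T F ξ ≤ ∫ ω in Sig₀, sqSumG G T F ω := by
    rw [E1]
    exact hSig₀max _ Set.inter_subset_right (hΩ₀meas.inter hDmeas) hvolID
  have hle2 : ∫ ω in Sig₀, sqSumG G T F ω ≤ ∫ ξ in Ω₀, sqSum T F ξ := by
    rw [E3]
    exact hΩ₀max Ω₁ hΩ₁meas hΩ₁vol hΩ₁inv
  exact le_antisymm hle1 hle2
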